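/- arXiv:2305.03786 — 2 statements merged into one kernel-verified Lean document; each statement's English description precedes it below -/
import Mathlib

section
/- Let κ > 0, K ≥ 0, and let A : [0,∞) → (ℝⁿ → ℝⁿ) be a family of linear maps, continuous in t, satisfying ⟨A(t)v, v⟩ ≥ κ‖v‖² for all t ≥ 0 and v ∈ ℝⁿ. Let r : [0,∞) → ℝⁿ be continuous with ‖r(t)‖ ≤ K e^{-κt} for all t ≥ 0, and let β : [0,∞) → ℝⁿ be differentiable with β(0) = 0 and β'(t) = -A(t)β(t) - r(t) for all t ≥ 0. Then ‖β(t)‖ ≤ K t e^{-κt} for all t ≥ 0. -/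
/-!
With `γ t = e^{κt} β t`, coercivity of `A` cancels the drift: `⟪γ, γ'⟫ ≤ e^{κt} ‖r‖ ‖γ‖ ≤ K ‖γ‖`.
Hence `‖γ‖` grows at rate at most `K` from `γ 0 = 0`, i.e. `‖γ t‖ ≤ K t`, which is the claim
after multiplying back by `e^{-κt}`.
-/

open Real Set RealInnerProductSpace

section

variable {F : Type*} [NormedAddCommGroup F] [InnerProductSpace ℝ F]

theorem HasDerivWithinAt.sqrt_norm_sq_add_sq {f : ℝ → F} {f' : F} {s : Set ℝ} {x : ℝ}
    (hf : HasDerivWithinAt f f' s x) {δ : ℝ} (hδ : δ ≠ 0) :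
    HasDerivWithinAt (fun y => √(‖f y‖ ^ 2 + δ ^ 2)) (⟪f x, f'⟫ / √(‖f x‖ ^ 2 + δ ^ 2)) s x := by
  have hpos : ‖f x‖ ^ 2 + δ ^ 2 ≠ 0 := by positivity
  convert (hf.norm_sq.add_const (δ ^ 2)).sqrt hpos using 1
  field_simp

theorem norm_le_norm_add_mul_of_inner_deriv_right_le {f f' : ℝ → F} {a b C : ℝ}
    (hf : ContinuousOn f (Icc a b)) (hf' : ∀ x ∈ Ico a b, HasDerivWithinAt f (f' x) (Ici x) x)
    (hC : 0 ≤ C) (bound : ∀ x ∈ Ico a b, ⟪f x, f' x⟫ ≤ C * ‖f x‖) (hab : a ≤ b) :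
    ‖f b‖ ≤ ‖f a‖ + C * (b - a) := by
  -- `√(‖f‖² + δ²)` is differentiable even where `f` vanishes, unlike `‖f‖`.
  refine le_of_forall_pos_le_add fun δ hδ => ?_
  have hreg := image_le_of_deriv_right_le_deriv_boundary
    (f := fun y => √(‖f y‖ ^ 2 + δ ^ 2)) (B := fun y => √(‖f a‖ ^ 2 + δ ^ 2) + C * (y - a))
    (by fun_prop) (fun x hx => (hf' x hx).sqrt_norm_sq_add_sq hδ.ne') (by simp) (by fun_prop)
    (fun x _ => ((hasDerivWithinAt_id x _).sub_const a).const_mul C |>.const_add _)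
    (fun x hx => ?_) (right_mem_Icc.2 hab)
  · have hfa : √(‖f a‖ ^ 2 + δ ^ 2) ≤ ‖f a‖ + δ :=
      sqrt_le_iff.2 ⟨by positivity, by nlinarith [norm_nonneg (f a)]⟩
    calc ‖f b‖ = √(‖f b‖ ^ 2) := (sqrt_sq (norm_nonneg _)).symm
      _ ≤ √(‖f b‖ ^ 2 + δ ^ 2) := sqrt_le_sqrt (by nlinarith)
      _ ≤ √(‖f a‖ ^ 2 + δ ^ 2) + C * (b - a) := hreg
      _ ≤ ‖f a‖ + C * (b - a) + δ := by linarith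
  · have hroot : ‖f x‖ ≤ √(‖f x‖ ^ 2 + δ ^ 2) := by
      rw [le_sqrt (norm_nonneg _) (by positivity)]; nlinarith
    rw [div_le_iff₀ (by positivity)]
    nlinarith [bound x hx, mul_le_mul_of_nonneg_left hroot hC]

theorem inner_smul_sub_sub_le_of_le_inner {T : F →L[ℝ] F} {κ : ℝ} {v : F}
    (hT : κ * ‖v‖ ^ 2 ≤ ⟪T v, v⟫) (w : F) :
    ⟪v, κ • v - T v - w⟫ ≤ ‖v‖ * ‖w‖ := by
  rw [inner_sub_right, inner_sub_right, real_inner_smul_right, real_inner_self_eq_norm_sq,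
    real_inner_comm]
  linarith [neg_le_of_abs_le (abs_real_inner_le_norm v w)]

theorem norm_le_mul_mul_exp_of_hasDerivAt_of_le_inner {κ K : ℝ} (hK : 0 ≤ K)
    {A : ℝ → F →L[ℝ] F} (hA : ∀ t ≥ (0 : ℝ), ∀ v : F, κ * ‖v‖ ^ 2 ≤ ⟪A t v, v⟫)
    {r : ℝ → F} (hr : ∀ t ≥ (0 : ℝ), ‖r t‖ ≤ K * exp (-κ * t))
    {β : ℝ → F} (hβ0 : β 0 = 0) (hβ : ∀ t ≥ (0 : ℝ), HasDerivAt β (-(A t (β t)) - r t) t)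
    {t : ℝ} (ht : 0 ≤ t) :
    ‖β t‖ ≤ K * t * exp (-κ * t) := by
  set γ : ℝ → F := fun s => exp (κ * s) • β s
  have hγ : ∀ s ≥ (0 : ℝ), HasDerivAt γ (exp (κ * s) • (κ • β s - A s (β s) - r s)) s := by
    intro s hs
    refine (((hasDerivAt_id s).const_mul κ).exp.smul (hβ s hs)).congr_deriv ?_
    simp only [id, mul_one]
    module
  have hγ_radial : ∀ s ≥ (0 : ℝ),
      ⟪γ s, exp (κ * s) • (κ • β s - A s (β s) - r s)⟫ ≤ K * ‖γ s‖ := by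
    intro s hs
    have hexp : exp (κ * s) * exp (-κ * s) = 1 := by
      rw [← exp_add, neg_mul, add_neg_cancel, exp_zero]
    calc ⟪γ s, exp (κ * s) • (κ • β s - A s (β s) - r s)⟫
        = exp (κ * s) * exp (κ * s) * ⟪β s, κ • β s - A s (β s) - r s⟫ := by
          simp only [γ, real_inner_smul_left, real_inner_smul_right]; ring
      _ ≤ exp (κ * s) * exp (κ * s) * (‖β s‖ * (K * exp (-κ * s))) := by
          gcongr
          exact (inner_smul_sub_sub_le_of_le_inner (hA s hs _) _).trans
            (mul_le_mul_of_nonneg_left (hr s hs) (norm_nonneg _))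
      _ = K * ‖γ s‖ := by
          simp only [γ, norm_smul, norm_of_nonneg (exp_pos _).le]
          linear_combination (exp (κ * s) * ‖β s‖ * K) * hexp
  have hγt := norm_le_norm_add_mul_of_inner_deriv_right_le
    (fun s hs => (hγ s hs.1).continuousAt.continuousWithinAt)
    (fun s hs => (hγ s hs.1).hasDerivWithinAt) hK (fun s hs => hγ_radial s hs.1) ht
  have hβγ : β t = exp (-κ * t) • γ t := by
    rw [smul_smul, ← exp_add, neg_mul, neg_add_cancel, exp_zero, one_smul]
  simp only [γ, hβ0, smul_zero, norm_zero, zero_add, sub_zero] at hγt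
  rw [hβγ, norm_smul, norm_of_nonneg (exp_pos _).le, mul_comm]
  exact mul_le_mul_of_nonneg_right hγt (exp_pos _).le

end

theorem stmt_8_general (n : ℕ) (κ K : ℝ) (hK : 0 ≤ K)
    (A : ℝ → EuclideanSpace ℝ (Fin n) →L[ℝ] EuclideanSpace ℝ (Fin n))
    (hA : ∀ t ≥ (0 : ℝ), ∀ v : EuclideanSpace ℝ (Fin n),
      κ * ‖v‖ ^ 2 ≤ (inner ℝ (A t v) v : ℝ))
    (r : ℝ → EuclideanSpace ℝ (Fin n))
    (hr : ∀ t ≥ (0 : ℝ), ‖r t‖ ≤ K * exp (-κ * t))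
    (β : ℝ → EuclideanSpace ℝ (Fin n))
    (hβ0 : β 0 = 0)
    (hβ : ∀ t ≥ (0 : ℝ), HasDerivAt β (-(A t (β t)) - r t) t) :
    ∀ t ≥ (0 : ℝ), ‖β t‖ ≤ K * t * exp (-κ * t) :=
  fun _ ht => norm_le_mul_mul_exp_of_hasDerivAt_of_le_inner hK hA hr hβ0 hβ ht

theorem stmt_8 (n : ℕ) (κ K : ℝ) (hκ : 0 < κ) (hK : 0 ≤ K)
    (A : ℝ → EuclideanSpace ℝ (Fin n) →L[ℝ] EuclideanSpace ℝ (Fin n))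
    (hAcont : ContinuousOn A (Set.Ici 0))
    (hA : ∀ t ≥ (0 : ℝ), ∀ v : EuclideanSpace ℝ (Fin n),
      κ * ‖v‖ ^ 2 ≤ (inner ℝ (A t v) v : ℝ))
    (r : ℝ → EuclideanSpace ℝ (Fin n))
    (hrcont : ContinuousOn r (Set.Ici 0))
    (hr : ∀ t ≥ (0 : ℝ), ‖r t‖ ≤ K * exp (-κ * t))
    (β : ℝ → EuclideanSpace ℝ (Fin n))
    (hβ0 : β 0 = 0)
    (hβ : ∀ t ≥ (0 : ℝ), HasDerivAt β (-(A t (β t)) - r t) t) :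
    ∀ t ≥ (0 : ℝ), ‖β t‖ ≤ K * t * exp (-κ * t) :=
  stmt_8_general n κ K hK A hA r hr β hβ0 hβ
end

section
/- There exist universal constants C₁, C₂ > 0 with the following property. Let d ≥ 1, let γ_d be the standard Gaussian measure on ℝᵈ, let L ≥ 0, and let W : ℝᵈ → ℝ be Lipschitz with constant L such that μ = e^{-W}·γ_d is a probability measure which is centered (∫ x dμ(x) = 0). Let φ : ℝᵈ → ℝ be a convex differentiable function whose gradient ∇φ pushes γ_d forward to μ (i.e. ∇φ is the quadratic optimal transport / Brenier map from γ_d onto μ). Then for every x ∈ ℝᵈ, ‖∇φ(x)‖ ≤ C₁·exp(C₂·max(L, L²))·√(d + ‖x‖²). -/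
/-!
By monotonicity of `∇φ`, if `R = ‖∇φ x‖` then `‖∇φ‖ ≥ R / 2` on a ball of radius `2√d` whose
centre lies within `6√d` of `x`. This ball has Gaussian mass at least
`exp (-(‖x‖ + 8√d)² / 2)`, and `∇φ` carries it into `{‖y‖ ≥ R / 2}`, so `μ` gives that set at least
the same mass. On the other hand `-W y ≤ -W 0 + L‖y‖`, and normalisation of `μ` bounds `-W 0` by
`log 2 + 3L√d`, so `μ {‖y‖ ≥ t} ≤ exp (C (1 + L² + d) - t² / 8)`. Comparing the two bounds gives
`R² ≲ (1 + L²) (d + ‖x‖²)`.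
-/

open MeasureTheory Real

/-- The standard Gaussian measure on `ℝᵈ`. -/
noncomputable def stdGaussian (d : ℕ) : Measure (EuclideanSpace ℝ (Fin d)) :=
  volume.withDensity fun x =>
    ENNReal.ofReal ((2 * π) ^ (-(d : ℝ) / 2) * exp (-‖x‖ ^ 2 / 2))

open scoped RealInnerProductSpace ENNReal NNReal

section GaussianIntegral

variable {V : Type*} [NormedAddCommGroup V] [InnerProductSpace ℝ V] [FiniteDimensional ℝ V]
  [MeasurableSpace V] [BorelSpace V]

lemma integrable_rexp_neg_mul_sq_norm {b : ℝ} (hb : 0 < b) :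
    Integrable fun v : V => rexp (-b * ‖v‖ ^ 2) := by
  refine (GaussianFourier.integrable_cexp_neg_mul_sq_norm_add (b := b) (by simpa using hb) 0
    (0 : V)).norm.congr (Filter.Eventually.of_forall fun v => ?_)
  simp [Complex.norm_exp, ← Complex.ofReal_pow]

lemma lintegral_ofReal_mul_rexp_neg_mul_sq_norm {b : ℝ} (hb : 0 < b) {c : ℝ} (hc : 0 ≤ c) :
    ∫⁻ v : V, ENNReal.ofReal (c * rexp (-b * ‖v‖ ^ 2))
      = ENNReal.ofReal (c * (π / b) ^ (Module.finrank ℝ V / 2 : ℝ)) := by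
  rw [← ofReal_integral_eq_lintegral_ofReal ((integrable_rexp_neg_mul_sq_norm hb).const_mul c)
    (Filter.Eventually.of_forall fun v => by positivity), integral_const_mul,
    GaussianFourier.integral_rexp_neg_mul_sq_norm hb]

end GaussianIntegral

lemma two_pi_rpow_mul_rpow {d : ℕ} {b : ℝ} (hb : 0 < b) :
    (2 * π) ^ (-(d : ℝ) / 2) * (π / b) ^ ((d : ℝ) / 2) = (1 / (2 * b)) ^ ((d : ℝ) / 2) := by
  rw [neg_div, rpow_neg (by positivity), ← inv_rpow (by positivity),
    ← mul_rpow (by positivity) (by positivity)]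
  congr 1
  field_simp

lemma lintegral_ofReal_mul_two_pi_rpow_mul_rexp {d : ℕ} {b : ℝ} (hb : 0 < b) {c : ℝ} (hc : 0 ≤ c) :
    ∫⁻ x : EuclideanSpace ℝ (Fin d),
        ENNReal.ofReal (c * (2 * π) ^ (-(d : ℝ) / 2) * rexp (-b * ‖x‖ ^ 2))
      = ENNReal.ofReal (c * (1 / (2 * b)) ^ ((d : ℝ) / 2)) := by
  rw [lintegral_ofReal_mul_rexp_neg_mul_sq_norm hb (by positivity), finrank_euclideanSpace_fin,
    mul_assoc, two_pi_rpow_mul_rpow hb]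

lemma one_le_two_pi_rpow_mul_four_pow (d : ℕ) : 1 ≤ (2 * π) ^ (-(d : ℝ) / 2) * 4 ^ d := by
  have h16 : (4 : ℝ) ^ d = 16 ^ ((d : ℝ) / 2) := by
    rw [show (16 : ℝ) = 4 ^ (2 : ℝ) by norm_num, ← rpow_mul (by norm_num),
      mul_div_cancel₀ _ two_ne_zero, rpow_natCast]
  rw [h16, neg_div, rpow_neg (by positivity), ← div_eq_inv_mul,
    ← div_rpow (by norm_num) (by positivity)]
  exact one_le_rpow ((one_le_div (by positivity)).2 (by linarith [pi_le_four])) (by positivity)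

lemma EuclideanSpace.ofReal_two_mul_pow_le_volume_closedBall {ι : Type*} [Fintype ι]
    (z : EuclideanSpace ℝ ι) {s : ℝ} (hs : 0 ≤ s) :
    ENNReal.ofReal ((2 * s) ^ Fintype.card ι)
      ≤ volume (Metric.closedBall z (√(Fintype.card ι) * s)) := by
  rw [← Real.volume_pi_closedBall _ hs,
    ← (PiLp.volume_preserving_ofLp ι).measure_preimage measurableSet_closedBall.nullMeasurableSet]
  refine measure_mono fun y (hy : dist (WithLp.ofLp y) (WithLp.ofLp z) ≤ s) => ?_
  have := (PiLp.antilipschitzWith_ofLp 2 fun _ : ι => ℝ).le_mul_dist y z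
  rw [Metric.mem_closedBall, sqrt_eq_rpow, one_div]
  simp only [one_div, ENNReal.toReal_inv, ENNReal.toReal_ofNat, NNReal.coe_rpow,
    NNReal.coe_natCast] at this
  exact this.trans (by gcongr)

lemma LipschitzWith.abs_sub_apply_zero_le {E : Type*} [SeminormedAddCommGroup E] {K : ℝ≥0}
    {W : E → ℝ} (hW : LipschitzWith K W) (y : E) : |W y - W 0| ≤ K * ‖y‖ := by
  simpa [Real.dist_eq] using hW.dist_le_mul y 0

noncomputable def stdGaussianPDF (d : ℕ) (x : EuclideanSpace ℝ (Fin d)) : ℝ :=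
  (2 * π) ^ (-(d : ℝ) / 2) * exp (-‖x‖ ^ 2 / 2)

section StdGaussianPDF

variable {d : ℕ}

lemma stdGaussianPDF_pos (x : EuclideanSpace ℝ (Fin d)) : 0 < stdGaussianPDF d x := by
  unfold stdGaussianPDF; positivity

lemma measurable_ofReal_stdGaussianPDF :
    Measurable fun x => ENNReal.ofReal (stdGaussianPDF d x) := by
  unfold stdGaussianPDF; fun_prop

end StdGaussianPDF

namespace StdGaussian

variable {d : ℕ}

lemma setLIntegral_eq {f : EuclideanSpace ℝ (Fin d) → ℝ≥0∞} (hf : Measurable f)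
    {s : Set (EuclideanSpace ℝ (Fin d))} (hs : MeasurableSet s) :
    ∫⁻ x in s, f x ∂stdGaussian d = ∫⁻ x in s, ENNReal.ofReal (stdGaussianPDF d x) * f x :=
  setLIntegral_withDensity_eq_setLIntegral_mul _ measurable_ofReal_stdGaussianPDF hf hs

instance : IsProbabilityMeasure (stdGaussian d) := by
  constructor
  calc stdGaussian d Set.univ = ∫⁻ x, ENNReal.ofReal (stdGaussianPDF d x) := by
        rw [stdGaussian, withDensity_apply _ MeasurableSet.univ, Measure.restrict_univ]; rfl
    _ = ∫⁻ x : EuclideanSpace ℝ (Fin d), ENNReal.ofReal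
          (1 * (2 * π) ^ (-(d : ℝ) / 2) * rexp (-(1 / 2) * ‖x‖ ^ 2)) := by
        simp_rw [stdGaussianPDF, one_mul, neg_mul, neg_div, one_div_mul_eq_div]
    _ = 1 := by rw [lintegral_ofReal_mul_two_pi_rpow_mul_rexp (by norm_num) zero_le_one]; norm_num

lemma setLIntegral_le_norm_exp_mul_norm_le (a : ℝ) {t : ℝ} (ht : 0 ≤ t) :
    ∫⁻ x in {x | t ≤ ‖x‖}, ENNReal.ofReal (exp (a * ‖x‖)) ∂stdGaussian d
      ≤ ENNReal.ofReal (exp (2 * a ^ 2 - t ^ 2 / 8 + d * log 2 / 2)) := by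
  have hS : MeasurableSet {x : EuclideanSpace ℝ (Fin d) | t ≤ ‖x‖} :=
    measurableSet_le measurable_const measurable_norm
  set c := exp (2 * a ^ 2 - t ^ 2 / 8)
  rw [setLIntegral_eq (by fun_prop) hS]
  calc _ ≤ ∫⁻ x in {x | t ≤ ‖x‖},
          ENNReal.ofReal (c * (2 * π) ^ (-(d : ℝ) / 2) * rexp (-(1 / 4) * ‖x‖ ^ 2)) := by
        refine setLIntegral_mono (by fun_prop) fun x (hx : t ≤ ‖x‖) => ?_
        rw [← ENNReal.ofReal_mul (stdGaussianPDF_pos x).le]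
        refine ENNReal.ofReal_le_ofReal ?_
        -- `‖x‖²/4 - a‖x‖ + 2a² - t²/8 = (‖x‖ - 4a)²/8 + (‖x‖² - t²)/8 ≥ 0`
        have hexp : -‖x‖ ^ 2 / 2 + a * ‖x‖ ≤ 2 * a ^ 2 - t ^ 2 / 8 + -(1 / 4) * ‖x‖ ^ 2 := by
          nlinarith [sq_nonneg (‖x‖ - 4 * a)]
        calc stdGaussianPDF d x * exp (a * ‖x‖)
            = (2 * π) ^ (-(d : ℝ) / 2) * exp (-‖x‖ ^ 2 / 2 + a * ‖x‖) := by
              rw [stdGaussianPDF, exp_add, mul_assoc]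
          _ ≤ (2 * π) ^ (-(d : ℝ) / 2) * exp (2 * a ^ 2 - t ^ 2 / 8 + -(1 / 4) * ‖x‖ ^ 2) := by
              gcongr
          _ = _ := by rw [exp_add]; ring
    _ ≤ ∫⁻ x, ENNReal.ofReal (c * (2 * π) ^ (-(d : ℝ) / 2) * rexp (-(1 / 4) * ‖x‖ ^ 2)) :=
        setLIntegral_le_lintegral _ _
    _ = _ := by
        rw [lintegral_ofReal_mul_two_pi_rpow_mul_rexp (by norm_num) (by positivity), exp_add]
        norm_num [c, rpow_def_of_pos]
        ring_nf

lemma measure_le_norm_le (t : ℝ) (ht : 0 ≤ t) :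
    stdGaussian d {x | t ≤ ‖x‖} ≤ ENNReal.ofReal (exp (d * log 2 / 2 - t ^ 2 / 8)) := by
  have h := setLIntegral_le_norm_exp_mul_norm_le (d := d) 0 ht
  simp only [zero_mul, exp_zero, ENNReal.ofReal_one, setLIntegral_one] at h
  convert h using 3
  ring

lemma ofReal_half_le_measure_closedBall (hd : 1 ≤ d) :
    ENNReal.ofReal (1 / 2) ≤ stdGaussian d (Metric.closedBall 0 (3 * √d)) := by
  have hd' : (1 : ℝ) ≤ d := by exact_mod_cast hd
  have hcompl : stdGaussian d (Metric.closedBall 0 (3 * √d))ᶜ ≤ ENNReal.ofReal (1 / 2) := by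
    calc _ ≤ stdGaussian d {x | 3 * √d ≤ ‖x‖} :=
          measure_mono fun x hx => (not_le.1 (by simpa using hx)).le
      _ ≤ ENNReal.ofReal (exp (d * log 2 / 2 - (3 * √d) ^ 2 / 8)) :=
          measure_le_norm_le _ (by positivity)
      _ ≤ ENNReal.ofReal (exp (-log 2)) := by
          rw [mul_pow, sq_sqrt (by positivity)]
          gcongr
          nlinarith [log_two_lt_d9]
      _ = ENNReal.ofReal (1 / 2) := by rw [exp_neg, exp_log two_pos, one_div]
  rw [← compl_compl (Metric.closedBall _ _), prob_compl_eq_one_sub measurableSet_closedBall.compl]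
  calc ENNReal.ofReal (1 / 2) = 1 - ENNReal.ofReal (1 / 2) := by
        rw [← ENNReal.ofReal_one, ← ENNReal.ofReal_sub _ (by norm_num)]; norm_num
    _ ≤ _ := tsub_le_tsub_left hcompl 1

lemma ofReal_exp_le_measure_closedBall (z : EuclideanSpace ℝ (Fin d)) :
    ENNReal.ofReal (exp (-(‖z‖ + 2 * √d) ^ 2 / 2))
      ≤ stdGaussian d (Metric.closedBall z (2 * √d)) := by
  set c := exp (-(‖z‖ + 2 * √d) ^ 2 / 2) * (2 * π) ^ (-(d : ℝ) / 2) with hc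
  have hvol : ENNReal.ofReal (4 ^ d) ≤ volume (Metric.closedBall z (2 * √d)) := by
    have := EuclideanSpace.ofReal_two_mul_pow_le_volume_closedBall z (zero_le_two (α := ℝ))
    rwa [Fintype.card_fin, mul_comm √_, show (2 * 2 : ℝ) = 4 by norm_num] at this
  have hpdf : ∀ y ∈ Metric.closedBall z (2 * √d),
      ENNReal.ofReal c ≤ ENNReal.ofReal (stdGaussianPDF d y) := by
    intro y hy
    have : ‖y‖ ≤ ‖z‖ + 2 * √d := by
      have := norm_le_norm_add_norm_sub' y z
      rw [mem_closedBall_iff_norm] at hy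
      linarith
    rw [hc, stdGaussianPDF, mul_comm]
    gcongr
  calc ENNReal.ofReal (exp (-(‖z‖ + 2 * √d) ^ 2 / 2))
      ≤ ENNReal.ofReal c * ENNReal.ofReal (4 ^ d) := by
        rw [← ENNReal.ofReal_mul (by positivity)]
        refine ENNReal.ofReal_le_ofReal ?_
        rw [hc, mul_assoc]
        exact le_mul_of_one_le_right (by positivity) (one_le_two_pi_rpow_mul_four_pow d)
    _ ≤ ENNReal.ofReal c * volume (Metric.closedBall z (2 * √d)) := by gcongr
    _ = ∫⁻ _ in Metric.closedBall z (2 * √d), ENNReal.ofReal c := (setLIntegral_const _ _).symm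
    _ ≤ ∫⁻ y in Metric.closedBall z (2 * √d), ENNReal.ofReal (stdGaussianPDF d y) :=
        setLIntegral_mono measurable_ofReal_stdGaussianPDF hpdf
    _ = _ := (withDensity_apply _ measurableSet_closedBall).symm

section Tilted

variable {K : ℝ≥0} {W : EuclideanSpace ℝ (Fin d) → ℝ}

lemma neg_apply_zero_le (hd : 1 ≤ d) (hW : LipschitzWith K W)
    (hprob : IsProbabilityMeasure
      ((stdGaussian d).withDensity fun x => ENNReal.ofReal (exp (-W x)))) :
    -W 0 ≤ log 2 + 3 * K * √d := by
  have hWm : Measurable W := hW.continuous.measurable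
  set e := exp (-W 0 - 3 * K * √d) with he
  have hmass : ENNReal.ofReal e * ENNReal.ofReal (1 / 2) ≤ 1 := by
    calc _ ≤ ENNReal.ofReal e * stdGaussian d (Metric.closedBall 0 (3 * √d)) := by
          gcongr; exact ofReal_half_le_measure_closedBall hd
      _ = ∫⁻ _ in Metric.closedBall 0 (3 * √d), ENNReal.ofReal e ∂stdGaussian d :=
          (setLIntegral_const _ _).symm
      _ ≤ ∫⁻ y in Metric.closedBall 0 (3 * √d), ENNReal.ofReal (exp (-W y)) ∂stdGaussian d := by
          refine setLIntegral_mono (by fun_prop) fun y hy => ?_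
          rw [mem_closedBall_zero_iff] at hy
          have := (abs_le.1 (hW.abs_sub_apply_zero_le y)).2
          rw [he]
          gcongr
          nlinarith [K.coe_nonneg]
      _ ≤ ∫⁻ y, ENNReal.ofReal (exp (-W y)) ∂stdGaussian d := setLIntegral_le_lintegral _ _
      _ = 1 := by
          rw [← hprob.measure_univ, withDensity_apply _ MeasurableSet.univ, Measure.restrict_univ]
  rw [← ENNReal.ofReal_mul (exp_pos _).le, ENNReal.ofReal_le_one] at hmass
  have : e ≤ exp (log 2) := by rw [exp_log two_pos]; linarith
  linarith [exp_le_exp.1 this]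

lemma withDensity_le_norm_le (hd : 1 ≤ d) (hW : LipschitzWith K W)
    (hprob : IsProbabilityMeasure
      ((stdGaussian d).withDensity fun x => ENNReal.ofReal (exp (-W x))))
    {t : ℝ} (ht : 0 ≤ t) :
    ((stdGaussian d).withDensity fun x => ENNReal.ofReal (exp (-W x))) {y | t ≤ ‖y‖}
      ≤ ENNReal.ofReal (exp (log 2 + 3 * K * √d + (2 * K ^ 2 - t ^ 2 / 8 + d * log 2 / 2))) := by
  have hWm : Measurable W := hW.continuous.measurable
  rw [withDensity_apply _ (measurableSet_le measurable_const measurable_norm)]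
  calc _ ≤ ∫⁻ y in {y | t ≤ ‖y‖},
          ENNReal.ofReal (exp (-W 0)) * ENNReal.ofReal (exp (K * ‖y‖)) ∂stdGaussian d := by
        refine setLIntegral_mono (by fun_prop) fun y _ => ?_
        rw [← ENNReal.ofReal_mul (exp_pos _).le, ← exp_add]
        gcongr
        linarith [(abs_le.1 (hW.abs_sub_apply_zero_le y)).1]
    _ = ENNReal.ofReal (exp (-W 0))
          * ∫⁻ y in {y | t ≤ ‖y‖}, ENNReal.ofReal (exp (K * ‖y‖)) ∂stdGaussian d :=
        lintegral_const_mul _ (by fun_prop)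
    _ ≤ ENNReal.ofReal (exp (log 2 + 3 * K * √d))
          * ENNReal.ofReal (exp (2 * K ^ 2 - t ^ 2 / 8 + d * log 2 / 2)) := by
        gcongr
        · exact neg_apply_zero_le hd hW hprob
        · simpa using setLIntegral_le_norm_exp_mul_norm_le (d := d) K ht
    _ = _ := by rw [← ENNReal.ofReal_mul (exp_pos _).le, ← exp_add]

end Tilted

end StdGaussian

section Convex

variable {E : Type*} [NormedAddCommGroup E] [InnerProductSpace ℝ E] [CompleteSpace E]
  {φ : E → ℝ}

lemma ConvexOn.inner_gradient_sub_le (hφ : ConvexOn ℝ Set.univ φ) (hd : Differentiable ℝ φ)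
    (a b : E) : ⟪gradient φ a, b - a⟫ ≤ φ b - φ a := by
  set g : ℝ → ℝ := fun t => φ (a + t • (b - a))
  have hg : ConvexOn ℝ Set.univ g := by
    simpa [Function.comp_def, AffineMap.lineMap_apply_module', add_comm]
      using hφ.comp_affineMap (AffineMap.lineMap a b)
  have hg' : HasDerivAt g (fderiv ℝ φ a (b - a)) 0 := by
    have hline : HasDerivAt (fun t : ℝ => a + t • (b - a)) (b - a) 0 := by
      simpa only [id, one_smul] using ((hasDerivAt_id (0 : ℝ)).smul_const (b - a)).const_add a
    have := (hd (a + (0 : ℝ) • (b - a))).hasFDerivAt.comp_hasDerivAt (0 : ℝ) hline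
    rwa [zero_smul, add_zero] at this
  have := hg.le_slope_of_hasDerivAt (Set.mem_univ 0) (Set.mem_univ 1) one_pos hg'
  simpa [inner_gradient_left, slope_def_field, g] using this

lemma ConvexOn.inner_gradient_sub_gradient_nonneg (hφ : ConvexOn ℝ Set.univ φ)
    (hd : Differentiable ℝ φ) (a b : E) : 0 ≤ ⟪gradient φ b - gradient φ a, b - a⟫ := by
  have hab := hφ.inner_gradient_sub_le hd a b
  have hba := hφ.inner_gradient_sub_le hd b a
  rw [← neg_sub b a, inner_neg_right] at hba
  rw [inner_sub_left]
  linarith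

end Convex

lemma exists_closedBall_forall_half_norm_le {E : Type*} [NormedAddCommGroup E]
    [InnerProductSpace ℝ E] {T : E → E} (hT : ∀ a b, 0 ≤ ⟪T b - T a, b - a⟫) (x : E) {r : ℝ}
    (hr : 0 < r) :
    ∃ z, ‖z - x‖ ≤ 3 / 2 * r ∧ ∀ y ∈ Metric.closedBall z (r / 2), ‖T x‖ / 2 ≤ ‖T y‖ := by
  rcases (norm_nonneg (T x)).eq_or_lt with hR | hR
  · exact ⟨x, by simp only [sub_self, norm_zero]; positivity, fun y _ => by rw [← hR]; simp⟩
  set z := x + (3 / 2 * r / ‖T x‖) • T x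
  have hzx : z - x = (3 / 2 * r / ‖T x‖) • T x := add_sub_cancel_left _ _
  have hzx_norm : ‖z - x‖ = 3 / 2 * r := by
    rw [hzx, norm_smul, norm_div, norm_norm, div_mul_cancel₀ _ hR.ne', Real.norm_eq_abs,
      abs_of_pos (by positivity)]
  refine ⟨z, hzx_norm.le, fun y hy => ?_⟩
  rw [mem_closedBall_iff_norm] at hy
  have hyx : y - x = (y - z) + (z - x) := (sub_add_sub_cancel _ _ _).symm
  have hinner : r * ‖T x‖ ≤ ⟪T x, y - x⟫ := by
    have hcs := neg_le_of_abs_le ((abs_real_inner_le_norm (T x) (y - z)).trans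
      (mul_le_mul_of_nonneg_left hy (norm_nonneg _)))
    rw [hyx, inner_add_right, hzx, real_inner_smul_right, real_inner_self_eq_norm_sq]
    field_simp
    nlinarith
  have hdist : ‖y - x‖ ≤ 2 * r := by
    rw [hyx]
    linarith [norm_add_le (y - z) (z - x)]
  have hmono : ⟪T x, y - x⟫ ≤ ⟪T y, y - x⟫ := by
    have := hT x y
    rw [inner_sub_left] at this
    linarith
  nlinarith [real_inner_le_norm (T y) (y - x), norm_nonneg (T y)]

lemma le_forty_mul_exp_mul_sqrt {d : ℕ} (hd : 1 ≤ d) {L a b R : ℝ} (hL : 0 ≤ L)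
    (hb : 0 ≤ b) (hba : b ≤ a + 6 * √d)
    (h : -(b + 2 * √d) ^ 2 / 2
      ≤ log 2 + 3 * L * √d + (2 * L ^ 2 - (R / 2) ^ 2 / 8 + d * log 2 / 2)) :
    R ≤ 40 * exp (max L (L ^ 2)) * √(d + a ^ 2) := by
  have hd' : (1 : ℝ) ≤ d := by exact_mod_cast hd
  have hs : √d ^ 2 = d := sq_sqrt (by positivity)
  have hlog : log 2 < 0.7 := log_two_lt_d9.trans (by norm_num)
  -- Cauchy–Schwarz: `(a + 8s)² ≤ 65 (a² + s²)`
  have hball : (b + 2 * √d) ^ 2 ≤ 65 * (d + a ^ 2) := by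
    nlinarith [sq_nonneg (8 * a - √d), sqrt_nonneg (d : ℝ)]
  have hR : R ^ 2 ≤ 1122 * ((1 + L ^ 2) * (d + a ^ 2)) := by
    nlinarith [sq_nonneg (L - √d), mul_nonneg (sq_nonneg L) (sq_nonneg a),
      mul_le_mul_of_nonneg_left hd' (sq_nonneg L)]
  have hexp : 1 + L ^ 2 ≤ exp (max L (L ^ 2)) ^ 2 := by
    calc 1 + L ^ 2 ≤ exp (L ^ 2) := by linarith [add_one_le_exp (L ^ 2)]
      _ ≤ exp (max L (L ^ 2)) := exp_le_exp.2 (le_max_right _ _)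
      _ ≤ exp (max L (L ^ 2)) ^ 2 :=
          le_self_pow₀ (one_le_exp (hL.trans (le_max_left _ _))) two_ne_zero
  calc R ≤ |R| := le_abs_self R
    _ ≤ √((40 * exp (max L (L ^ 2))) ^ 2 * (d + a ^ 2)) := by
        refine abs_le_sqrt (hR.trans ?_)
        nlinarith [mul_le_mul_of_nonneg_right hexp (by positivity : (0 : ℝ) ≤ d + a ^ 2)]
    _ = _ := by rw [sqrt_mul (by positivity), sqrt_sq (by positivity)]

theorem stmt_19 : ∃ C₁ C₂ : ℝ, 0 < C₁ ∧ 0 < C₂ ∧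
    ∀ (d : ℕ), 1 ≤ d → ∀ (L : ℝ), 0 ≤ L →
    ∀ W : EuclideanSpace ℝ (Fin d) → ℝ, LipschitzWith (Real.toNNReal L) W →
    IsProbabilityMeasure ((stdGaussian d).withDensity fun x => ENNReal.ofReal (exp (-W x))) →
    (∫ x, x ∂((stdGaussian d).withDensity fun x => ENNReal.ofReal (exp (-W x)))) = 0 →
    ∀ φ : EuclideanSpace ℝ (Fin d) → ℝ, ConvexOn ℝ Set.univ φ → Differentiable ℝ φ →
    Measure.map (fun x => gradient φ x) (stdGaussian d) =
      (stdGaussian d).withDensity (fun x => ENNReal.ofReal (exp (-W x))) →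
    ∀ x, ‖gradient φ x‖ ≤ C₁ * exp (C₂ * max L (L ^ 2)) * sqrt (d + ‖x‖ ^ 2) := by
  refine ⟨40, 1, by norm_num, one_pos, fun d hd L hL W hW hprob _ φ hconv hdiff hmap x => ?_⟩
  have hmeas : Measurable (gradient φ) :=
    (InnerProductSpace.toDual ℝ _).symm.continuous.measurable.comp (measurable_fderiv ℝ φ)
  obtain ⟨z, hzx, hball⟩ := exists_closedBall_forall_half_norm_le
    (hconv.inner_gradient_sub_gradient_nonneg hdiff) x (r := 4 * √d) (by positivity)
  have hpush : stdGaussian d (Metric.closedBall z (2 * √d))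
      ≤ ((stdGaussian d).withDensity fun x => ENNReal.ofReal (exp (-W x)))
          {y | ‖gradient φ x‖ / 2 ≤ ‖y‖} := by
    rw [← hmap, Measure.map_apply hmeas (measurableSet_le measurable_const measurable_norm)]
    exact measure_mono fun y hy => hball y (by rwa [show 4 * √d / 2 = 2 * √d by ring])
  have h := ((StdGaussian.ofReal_exp_le_measure_closedBall z).trans hpush).trans
    (StdGaussian.withDensity_le_norm_le hd hW hprob (by positivity))
  rw [ENNReal.ofReal_le_ofReal_iff (exp_pos _).le, exp_le_exp, Real.coe_toNNReal L hL] at h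
  rw [one_mul]
  exact le_forty_mul_exp_mul_sqrt hd hL (norm_nonneg z)
    (by linarith [norm_le_norm_add_norm_sub' z x]) h
end
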